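/- Let n and e be positive integers with 1 ≤ e ≤ n, and let c be any integer. Then the number of e-element subsets J of [1,n] such that c(J) = c and n ∉ J is C(e−1, c−1)·C(n−e, c). -/

import Mathlib

/-- Binomial coefficient `C(a,b)` for integers, with the convention that it is `0`
when `a < 0` or `b < 0` (and, as usual, when `b > a`), and `C(a,0) = 1` for `a ≥ 0`. -/
def intChoose (a b : ℤ) : ℕ :=
  if 0 ≤ a ∧ 0 ≤ b then a.toNat.choose b.toNat else 0

/-- The number of connected components of a finite set of integers:
`c(J) = |{j ∈ J : j+1 ∉ J}|`. -/
def numComponents (J : Finset ℕ) : ℕ := (J.filter (fun j => j + 1 ∉ J)).card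

/-!
Count separately the sets that avoid and that contain the top element: `A(n, e, c)` and
`B(n, e, c)`. A subset of `[1, n+1]` avoiding `n+1` is a subset of `[1, n]`, and putting `n+1`
on top of `J ⊆ [1, n]` opens a new component exactly when `n ∉ J`. Hence
`A(n+1, e, c) = A(n, e, c) + B(n, e, c)` and `B(n+1, e+1, c) = B(n, e, c) + A(n, e, c-1)`,
and Pascal's rule shows by induction on `n` that these recursions are solved by
`A = C(e-1, c-1) C(n-e, c)` and `B = C(e-1, c-1) C(n-e, c-1)`.
-/

open Finset

lemma intChoose_of_neg_left {a : ℤ} (b : ℤ) (ha : a < 0) : intChoose a b = 0 := by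
  simp [intChoose, ha.not_ge]

lemma intChoose_of_neg_right (a : ℤ) {b : ℤ} (hb : b < 0) : intChoose a b = 0 := by
  simp [intChoose, hb.not_ge]

lemma intChoose_natCast (a b : ℕ) : intChoose a b = a.choose b := by
  simp [intChoose]

lemma intChoose_zero_left (b : ℤ) : intChoose 0 b = if b = 0 then 1 else 0 := by
  rcases lt_or_ge b 0 with hb | hb
  · rw [intChoose_of_neg_right _ hb, if_neg hb.ne]
  lift b to ℕ using hb
  rw [← Nat.cast_zero, intChoose_natCast]
  rcases b with _ | b
  · simp
  · rw [Nat.choose_zero_succ, eq_comm, ite_eq_right_iff]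
    omega

/-- Pascal's rule; its only failure is `C(0, 0) ≠ C(-1, -1) + C(-1, 0)`. -/
lemma intChoose_succ_succ {a b : ℤ} (h : a ≠ -1 ∨ b ≠ -1) :
    intChoose (a + 1) (b + 1) = intChoose a b + intChoose a (b + 1) := by
  rcases lt_or_ge b (-1) with hb | hb
  · rw [intChoose_of_neg_right _ (by omega : b + 1 < 0),
      intChoose_of_neg_right _ (by omega : b < 0), intChoose_of_neg_right _ (by omega : b + 1 < 0)]
  rcases lt_or_ge a 0 with ha | ha
  · rw [intChoose_of_neg_left _ ha, intChoose_of_neg_left _ ha]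
    rcases lt_or_ge a (-1) with ha' | ha'
    · exact intChoose_of_neg_left _ (by omega)
    · obtain rfl : a = -1 := by omega
      rw [show (-1 : ℤ) + 1 = 0 by rfl, intChoose_zero_left, if_neg (by omega)]
  lift a to ℕ using ha
  rcases eq_or_ne b (-1) with rfl | hb'
  · have : (0 : ℤ) ≤ a + 1 := by omega
    simp [intChoose, this]
  lift b to ℕ using (by omega)
  simp only [← Nat.cast_succ, intChoose_natCast, Nat.choose_succ_succ]

lemma card_filter_eq_add_of_iff_or {α : Type*} {s : Finset α} {p q r : α → Prop}
    [DecidablePred p] [DecidablePred q] [DecidablePred r]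
    (h : ∀ x ∈ s, p x ↔ q x ∨ r x) (hqr : ∀ x ∈ s, q x → ¬ r x) :
    #{x ∈ s | p x} = #{x ∈ s | q x} + #{x ∈ s | r x} := by
  classical
  rw [← card_union_of_disjoint (disjoint_filter.2 hqr), ← filter_or]
  exact congrArg card (filter_congr h)

lemma card_filter_powerset_insert {α : Type*} [DecidableEq α] {a : α} {s : Finset α}
    (ha : a ∉ s) (p : Finset α → Prop) [DecidablePred p] :
    #{J ∈ (insert a s).powerset | p J} =
      #{J ∈ s.powerset | p J} + #{J ∈ s.powerset | p (insert a J)} := by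
  simp only [card_filter]
  exact sum_powerset_insert ha _

lemma numComponents_insert_succ {J : Finset ℕ} {m : ℕ} (hJ : ∀ j ∈ J, j ≤ m) :
    numComponents (insert (m + 1) J) = numComponents J + if m ∈ J then 0 else 1 := by
  have hm : m + 1 ∉ J := fun h => by have := hJ _ h; omega
  have hm2 : m + 2 ∉ J := fun h => by have := hJ _ h; omega
  have key : {j ∈ insert (m + 1) J | j + 1 ∉ insert (m + 1) J} =
      insert (m + 1) ({j ∈ J | j + 1 ∉ J}.erase m) := by
    ext j
    simp only [mem_filter, mem_insert, mem_erase]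
    grind
  have hm' : m + 1 ∉ {j ∈ J | j + 1 ∉ J}.erase m := fun h =>
    hm (mem_filter.1 (mem_of_mem_erase h)).1
  have hmem : m ∈ {j ∈ J | j + 1 ∉ J} ↔ m ∈ J := by simp [hm]
  rw [numComponents, key, card_insert_of_notMem hm', card_erase_eq_ite, numComponents]
  simp only [hmem]
  split_ifs with h
  · have := card_pos.2 ⟨m, hmem.2 h⟩; omega
  · rfl

def numSubsetsAvoidingTop (n e : ℕ) (c : ℤ) : ℕ :=
  ((Finset.Icc 1 n).powerset.filter
    (fun J => J.card = e ∧ (numComponents J : ℤ) = c ∧ n ∉ J)).card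

def numSubsetsContainingTop (n e : ℕ) (c : ℤ) : ℕ :=
  ((Finset.Icc 1 n).powerset.filter
    (fun J => J.card = e ∧ (numComponents J : ℤ) = c ∧ n ∈ J)).card

lemma Icc_one_add_one_eq_insert (n : ℕ) : Icc 1 (n + 1) = insert (n + 1) (Icc 1 n) :=
  (insert_Icc_right_eq_Icc_add_one (by omega)).symm

lemma numSubsetsAvoidingTop_zero (e : ℕ) (c : ℤ) (he : 1 ≤ e) :
    numSubsetsAvoidingTop 0 e c = 0 := by
  refine card_eq_zero.2 <| filter_eq_empty_iff.2 fun J hJ h => ?_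
  have hJ0 : #J ≤ 0 := by simpa using card_le_card (mem_powerset.1 hJ)
  omega

lemma numSubsetsContainingTop_zero (e : ℕ) (c : ℤ) : numSubsetsContainingTop 0 e c = 0 := by
  simp [numSubsetsContainingTop]

lemma numSubsetsAvoidingTop_zero_card (n : ℕ) (c : ℤ) :
    numSubsetsAvoidingTop n 0 c = if c = 0 then 1 else 0 := by
  split_ifs with hc
  · subst hc
    rw [numSubsetsAvoidingTop, card_eq_one]
    refine ⟨∅, ?_⟩
    ext J
    simp only [mem_filter, mem_powerset, card_eq_zero, mem_singleton]
    constructor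
    · exact fun h => h.2.1
    · rintro rfl
      simp [numComponents]
  · refine card_eq_zero.2 <| filter_eq_empty_iff.2 fun J _ h => ?_
    simp [card_eq_zero.1 h.1, numComponents, eq_comm, hc] at h

lemma numSubsetsContainingTop_zero_card (n : ℕ) (c : ℤ) :
    numSubsetsContainingTop n 0 c = 0 := by
  refine card_eq_zero.2 <| filter_eq_empty_iff.2 fun J _ h => ?_
  simp [card_eq_zero.1 h.1] at h

lemma numSubsetsAvoidingTop_succ (n e : ℕ) (c : ℤ) :
    numSubsetsAvoidingTop (n + 1) e c =
      numSubsetsAvoidingTop n e c + numSubsetsContainingTop n e c := by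
  rw [numSubsetsAvoidingTop, Icc_one_add_one_eq_insert, card_filter_powerset_insert (by simp)]
  simp only [mem_insert_self, not_true_eq_false, and_false, filter_false, card_empty, add_zero]
  refine card_filter_eq_add_of_iff_or (fun J hJ => ?_) (fun J _ h h' => h.2.2 h'.2.2)
  have : n + 1 ∉ J := fun h => by simpa using mem_powerset.1 hJ h
  tauto

lemma numSubsetsContainingTop_succ_succ (n e : ℕ) (c : ℤ) :
    numSubsetsContainingTop (n + 1) (e + 1) c =
      numSubsetsContainingTop n e c + numSubsetsAvoidingTop n e (c - 1) := by
  rw [numSubsetsContainingTop, Icc_one_add_one_eq_insert, card_filter_powerset_insert (by simp)]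
  have top_notMem : ∀ J ∈ (Icc 1 n).powerset, n + 1 ∉ J := fun J hJ h => by
    simpa using mem_powerset.1 hJ h
  rw [card_eq_zero.2 (filter_eq_empty_iff.2 fun J hJ h => top_notMem J hJ h.2.2), zero_add]
  refine card_filter_eq_add_of_iff_or (fun J hJ => ?_) (fun J _ h h' => h'.2.2 h.2.2)
  have hle : ∀ j ∈ J, j ≤ n := fun j hj => (mem_Icc.1 (mem_powerset.1 hJ hj)).2
  rw [card_insert_of_notMem (top_notMem J hJ), numComponents_insert_succ hle]
  split_ifs with h <;> simp [h, eq_sub_iff_add_eq]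

theorem numSubsetsAvoidingTop_eq_and_numSubsetsContainingTop_eq (n : ℕ) :
    (∀ e c, 1 ≤ e → numSubsetsAvoidingTop n e c =
      intChoose ((e : ℤ) - 1) (c - 1) * intChoose ((n : ℤ) - e) c) ∧
    ∀ e c, numSubsetsContainingTop n e c =
      intChoose ((e : ℤ) - 1) (c - 1) * intChoose ((n : ℤ) - e) (c - 1) := by
  induction n with
  | zero =>
    refine ⟨fun e c he => ?_, fun e c => ?_⟩
    · rw [numSubsetsAvoidingTop_zero e c he, intChoose_of_neg_left c (by omega), mul_zero]
    · rw [numSubsetsContainingTop_zero]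
      rcases e.eq_zero_or_pos with rfl | he
      · rw [intChoose_of_neg_left (a := (0 : ℕ) - 1) _ (by omega), zero_mul]
      · rw [intChoose_of_neg_left (a := (0 : ℕ) - e) _ (by omega), mul_zero]
  | succ n ih =>
    obtain ⟨ihA, ihB⟩ := ih
    refine ⟨fun e c he => ?_, fun e c => ?_⟩
    · rw [numSubsetsAvoidingTop_succ, ihA e c he, ihB e c, ← mul_add]
      rcases eq_or_ne c 0 with rfl | hc
      · simp [intChoose_of_neg_right]
      · have pascal : intChoose ((n : ℤ) - e + 1) (c - 1 + 1) = _ :=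
          intChoose_succ_succ (Or.inr (by omega))
        rw [sub_add_cancel] at pascal
        rw [Nat.cast_succ, add_sub_right_comm, pascal, add_comm]
    · cases e with
      | zero => simp [numSubsetsContainingTop_zero_card, intChoose_of_neg_left]
      | succ e =>
        rw [numSubsetsContainingTop_succ_succ, ihB]
        push_cast
        rw [add_sub_add_right_eq_sub, add_sub_cancel_right]
        rcases e.eq_zero_or_pos with rfl | he
        · rw [numSubsetsAvoidingTop_zero_card]
          simp only [CharP.cast_eq_zero, zero_sub, sub_zero, intChoose_zero_left,
            intChoose_of_neg_left _ (by omega : (-1 : ℤ) < 0), zero_mul, zero_add]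
          split_ifs with hc <;> simp [hc, intChoose]
        · have pascal := intChoose_succ_succ (a := e - 1) (b := c - 1 - 1) (Or.inl (by omega))
          rw [sub_add_cancel, sub_add_cancel] at pascal
          rw [ihA e (c - 1) he, ← add_mul, pascal, add_comm]

theorem num_subsets_with_components_avoiding_top_general (n e : ℕ) (he : 1 ≤ e)
    (c : ℤ) :
    ((Finset.Icc 1 n).powerset.filter
        (fun J => J.card = e ∧ (numComponents J : ℤ) = c ∧ n ∉ J)).card
      = intChoose ((e : ℤ) - 1) (c - 1) * intChoose ((n : ℤ) - e) c :=
  (numSubsetsAvoidingTop_eq_and_numSubsetsContainingTop_eq n).1 e c he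

/-- The number of `e`-element subsets `J` of `[1,n]` with `c(J) = c` not containing `n` is
`C(e−1, c−1) · C(n−e, c)`. -/
theorem num_subsets_with_components_avoiding_top (n e : ℕ) (he : 1 ≤ e) (hn : e ≤ n)
    (c : ℤ) :
    ((Finset.Icc 1 n).powerset.filter
        (fun J => J.card = e ∧ (numComponents J : ℤ) = c ∧ n ∉ J)).card
      = intChoose ((e : ℤ) - 1) (c - 1) * intChoose ((n : ℤ) - e) c :=
  num_subsets_with_components_avoiding_top_general n e he c
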